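/- arXiv:1805.05253 — 7 statements merged into one kernel-verified Lean document; each statement's English description precedes it below -/
import Mathlib

section
/- Let n ≥ 1 and let σ be a permutation of {1,…,n} with #(σ) = c cycles. Then there exist transpositions τ_1,…,τ_{c−1} in S_n such that σ∘τ_1∘…∘τ_{c−1} is a single cycle of length n (i.e. has exactly one cycle), |ℓ(σ∘τ_1∘…∘τ_{c−1}) − ℓ(σ)| ≤ 2(c−1), and |ℓ̄(σ∘τ_1∘…∘τ_{c−1}) − ℓ̄(σ)| ≤ 2(c−1). -/
noncomputable section

/-- `s` is (the index set of) an increasing subsequence of `σ`. -/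
def IncSeq {n : ℕ} (σ : Equiv.Perm (Fin n)) (s : Finset (Fin n)) : Prop :=
  ∀ i ∈ s, ∀ j ∈ s, i < j → σ i < σ j

/-- `s` is (the index set of) a decreasing subsequence of `σ`. -/
def DecSeq {n : ℕ} (σ : Equiv.Perm (Fin n)) (s : Finset (Fin n)) : Prop :=
  ∀ i ∈ s, ∀ j ∈ s, i < j → σ j < σ i

/-- ℓ(σ): maximal cardinality of an increasing subsequence of `σ`. -/
def lis {n : ℕ} (σ : Equiv.Perm (Fin n)) : ℕ :=
  sSup {k | ∃ s : Finset (Fin n), IncSeq σ s ∧ s.card = k}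

/-- ℓ̄(σ): maximal cardinality of a decreasing subsequence of `σ`. -/
def lds {n : ℕ} (σ : Equiv.Perm (Fin n)) : ℕ :=
  sSup {k | ∃ s : Finset (Fin n), DecSeq σ s ∧ s.card = k}

/-- #(σ): number of cycles of `σ`, fixed points counted as cycles. -/
def numCycles {n : ℕ} (σ : Equiv.Perm (Fin n)) : ℕ :=
  σ.cycleType.card + (Finset.univ.filter fun x => σ x = x).card

/-!
Multiplying `σ` by the transposition of two points lying in different cycles merges these two
cycles into one and leaves the others alone, so `c - 1` such transpositions turn `σ` into a
single cycle. Each transposition changes `σ` at two points only, so removing these points from a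
longest increasing subsequence shows that `ℓ` moves by at most `2` per step; since
`ℓ̄ σ = ℓ (rev ∘ σ)`, the same holds for `ℓ̄`.
-/

open Equiv Equiv.Perm Finset

namespace List

variable {α : Type*} [DecidableEq α]

theorem formPerm_cons_append_cons {a b : α} {l m : List α} (h : (a :: l ++ b :: m).Nodup) :
    formPerm (a :: l ++ b :: m) = Equiv.swap a b * formPerm (a :: l) * formPerm (b :: m) := by
  induction l generalizing a with
  | nil => simp
  | cons c l ih =>
    have hac : a ≠ c := by grind
    have hab : a ≠ b := by grind
    have hcb : c ≠ b := by grind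
    have hswap : Equiv.swap a c * Equiv.swap c b = Equiv.swap a b * Equiv.swap a c := by
      ext x
      simp only [Perm.mul_apply, swap_apply_def]
      split_ifs <;> simp_all
    calc formPerm (a :: c :: l ++ b :: m)
        = Equiv.swap a c * formPerm (c :: l ++ b :: m) := formPerm_cons_cons _ _ _
      _ = Equiv.swap a b * formPerm (a :: c :: l) * formPerm (b :: m) := by
        rw [ih h.of_cons, formPerm_cons_cons, ← mul_assoc, ← mul_assoc, hswap]
        simp only [mul_assoc]

theorem card_support_formPerm_add_one [Fintype α] {l : List α} (hl : l.Nodup) (hne : l ≠ []) :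
    #(formPerm l).support + 1 = Multiset.card (formPerm l).cycleType + l.length := by
  rcases l with _ | ⟨a, _ | ⟨b, l⟩⟩
  · exact absurd rfl hne
  · simp
  · have hlen : 2 ≤ (a :: b :: l).length := by simp
    rw [support_formPerm_of_nodup _ hl (by simp), toFinset_card_of_nodup hl,
      card_cycleType_eq_one.mpr (isCycle_formPerm hl hlen)]
    omega

end List

namespace Equiv.Perm

variable {α : Type*} [Fintype α] [DecidableEq α] {σ : Perm α} {a b : α}

variable (σ a) in
/-- Unlike `σ.toList a`, this is `[a]`, not `[]`, when `a` is a fixed point. -/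
def cycleList : List α := a :: (σ.toList a).tail

theorem cycleList_eq_toList (ha : a ∈ σ.support) : σ.cycleList a = σ.toList a := by
  obtain ⟨b, t, hbt⟩ := List.exists_cons_of_ne_nil (toList_eq_nil_iff.not_left.mpr ha)
  have hb : b = a := by simpa [hbt] using toList_getElem_zero σ a ha
  rw [cycleList, hbt, hb, List.tail_cons]

variable (σ a) in
theorem formPerm_cycleList : (σ.cycleList a).formPerm = σ.cycleOf a := by
  by_cases ha : a ∈ σ.support
  · rw [cycleList_eq_toList ha, formPerm_toList]
  · rw [cycleList, toList_eq_nil_iff.mpr ha, List.tail_nil, List.formPerm_singleton, eq_comm,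
      cycleOf_eq_one_iff]
    simpa using ha

variable (σ a) in
theorem nodup_cycleList : (σ.cycleList a).Nodup := by
  by_cases ha : a ∈ σ.support
  · rw [cycleList_eq_toList ha]
    exact nodup_toList σ a
  · simp [cycleList, toList_eq_nil_iff.mpr ha]

theorem sameCycle_of_mem_cycleList {x : α} (hx : x ∈ σ.cycleList a) : σ.SameCycle a x := by
  rcases List.mem_cons.mp hx with rfl | hx
  · rfl
  · exact (mem_toList_iff.mp (List.mem_of_mem_tail hx)).1

theorem exists_eq_cycleOf_mul_cycleOf_mul (h : ¬σ.SameCycle a b) :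
    ∃ d : Perm α, σ = σ.cycleOf a * σ.cycleOf b * d ∧
      ∀ x, σ.SameCycle a x ∨ σ.SameCycle b x → d x = x := by
  refine ⟨(σ.cycleOf a * σ.cycleOf b)⁻¹ * σ, (mul_inv_cancel_left _ _).symm,
    fun x hx => ?_⟩
  rw [mul_inv_rev, Perm.mul_apply, Perm.mul_apply, inv_eq_iff_eq, inv_eq_iff_eq]
  rcases hx with hx | hx
  · rw [cycleOf_apply_of_not_sameCycle fun hb => h (hx.trans hb.symm), hx.cycleOf_apply]
  · rw [hx.cycleOf_apply, cycleOf_apply_of_not_sameCycle fun ha =>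
      h ((sameCycle_apply_right.mp ha).trans hx.symm)]

theorem disjoint_cycleOf_of_not_sameCycle (h : ¬σ.SameCycle a b) :
    (σ.cycleOf a).Disjoint (σ.cycleOf b) := fun x => by
  by_cases hx : σ.SameCycle a x
  · exact Or.inr (cycleOf_apply_of_not_sameCycle fun hb => h (hx.trans hb.symm))
  · exact Or.inl (cycleOf_apply_of_not_sameCycle hx)

theorem nodup_cycleList_append (h : ¬σ.SameCycle a b) :
    (σ.cycleList a ++ σ.cycleList b).Nodup :=
  List.nodup_append.mpr ⟨nodup_cycleList σ a, nodup_cycleList σ b, fun _ hx _ hy hxy =>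
    h ((sameCycle_of_mem_cycleList hx).trans (hxy ▸ sameCycle_of_mem_cycleList hy).symm)⟩

theorem swap_mul_eq_formPerm_cycleList_append_mul {d : Perm α} (h : ¬σ.SameCycle a b)
    (hσ : σ = σ.cycleOf a * σ.cycleOf b * d) :
    swap a b * σ = (σ.cycleList a ++ σ.cycleList b).formPerm * d := calc
  swap a b * σ = swap a b * (σ.cycleList a).formPerm * (σ.cycleList b).formPerm * d := by
    conv_lhs => rw [hσ]
    simp only [formPerm_cycleList, mul_assoc]
  _ = (σ.cycleList a ++ σ.cycleList b).formPerm * d :=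
    congrArg (· * d) (List.formPerm_cons_append_cons (nodup_cycleList_append h)).symm

/-- `#σ.support - card σ.cycleType` is the number of points minus the number of cycles. -/
theorem card_support_add_card_cycleType_swap_mul (h : ¬σ.SameCycle a b) :
    #σ.support + Multiset.card (swap a b * σ).cycleType + 1
      = #(swap a b * σ).support + Multiset.card σ.cycleType := by
  obtain ⟨d, hσ, hd⟩ := exists_eq_cycleOf_mul_cycleOf_mul h
  have hdisj : ∀ f : Perm α, (∀ x, f x ≠ x → σ.SameCycle a x ∨ σ.SameCycle b x) →
      f.Disjoint d := fun f hf x => by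
    by_cases hx : f x = x
    · exact Or.inl hx
    · exact Or.inr (hd x (hf x hx))
  have hAd : (σ.cycleOf a).Disjoint d := hdisj _ fun x hx =>
    Or.inl (not_not.mp (mt cycleOf_apply_of_not_sameCycle hx))
  have hBd : (σ.cycleOf b).Disjoint d := hdisj _ fun x hx =>
    Or.inr (not_not.mp (mt cycleOf_apply_of_not_sameCycle hx))
  have hABd : (σ.cycleList a ++ σ.cycleList b).formPerm.Disjoint d := hdisj _ fun x hx => by
    rcases List.mem_append.mp (not_not.mp (mt List.formPerm_apply_of_notMem hx)) with hx | hx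
    · exact Or.inl (sameCycle_of_mem_cycleList hx)
    · exact Or.inr (sameCycle_of_mem_cycleList hx)
  have hab := disjoint_cycleOf_of_not_sameCycle h
  have hσS : #σ.support = #(σ.cycleOf a).support + #(σ.cycleOf b).support + #d.support := by
    conv_lhs => rw [hσ, (hAd.mul_left hBd).card_support_mul, hab.card_support_mul]
  have hσK : Multiset.card σ.cycleType = Multiset.card (σ.cycleOf a).cycleType
      + Multiset.card (σ.cycleOf b).cycleType + Multiset.card d.cycleType := by
    conv_lhs => rw [hσ, (hAd.mul_left hBd).cycleType_mul, hab.cycleType_mul]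
    simp only [Multiset.card_add]
  have hA := List.card_support_formPerm_add_one (nodup_cycleList σ a) (List.cons_ne_nil _ _)
  have hB := List.card_support_formPerm_add_one (nodup_cycleList σ b) (List.cons_ne_nil _ _)
  have hAB' := List.card_support_formPerm_add_one (nodup_cycleList_append h)
    (by simp [cycleList])
  rw [formPerm_cycleList] at hA hB
  rw [List.length_append] at hAB'
  rw [swap_mul_eq_formPerm_cycleList_append_mul h hσ, hABd.card_support_mul, hABd.cycleType_mul,
    Multiset.card_add]
  omega

end Equiv.Perm

section NumCycles

variable {n : ℕ} {σ : Perm (Fin n)}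

variable (σ) in
theorem numCycles_add_card_support :
    numCycles σ + #σ.support = n + Multiset.card σ.cycleType := by
  have hsupp : #σ.support = #(univ.filter fun x => ¬σ x = x) := rfl
  have := card_filter_add_card_filter_not (s := univ) fun x => σ x = x
  rw [card_univ, Fintype.card_fin] at this
  rw [numCycles]
  omega

theorem numCycles_mul_swap {x y : Fin n} (h : ¬σ.SameCycle x y) :
    numCycles (σ * swap x y) + 1 = numCycles σ := by
  have hσ : σ * swap x y = swap (σ x) (σ y) * σ := by
    rw [swap_apply_apply, inv_mul_cancel_right]
  have h' : ¬σ.SameCycle (σ x) (σ y) := by rwa [sameCycle_apply_left, sameCycle_apply_right]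
  have := card_support_add_card_cycleType_swap_mul h'
  have := numCycles_add_card_support σ
  have := numCycles_add_card_support (swap (σ x) (σ y) * σ)
  rw [hσ]
  omega

theorem one_le_numCycles (hn : 1 ≤ n) (σ : Perm (Fin n)) : 1 ≤ numCycles σ := by
  by_contra! h0
  obtain rfl : σ = 1 := card_cycleType_eq_zero.mp (by rw [numCycles] at h0; omega)
  have := numCycles_add_card_support (1 : Perm (Fin n))
  rw [support_one, card_empty, cycleType_one, Multiset.card_zero] at this
  omega

theorem numCycles_le_one_of_forall_sameCycle (h : ∀ x y, σ.SameCycle x y) :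
    numCycles σ ≤ 1 := by
  have hcount := numCycles_add_card_support σ
  by_cases h1 : σ = 1
  · subst h1
    have hn : n ≤ 1 := by
      simpa using Fintype.card_le_one_iff.mpr fun x y => sameCycle_one.mp (h x y)
    rw [support_one, card_empty, cycleType_one, Multiset.card_zero] at hcount
    omega
  · obtain ⟨x, hx⟩ := not_forall.mp (mt Equiv.ext h1)
    have hcyc : σ.IsCycle := ⟨x, hx, fun y _ => h x y⟩
    have hsupp : σ.support = univ :=
      eq_univ_of_forall fun y => mem_support.mpr fun hy => hx ((h x y).apply_eq_self_iff.mpr hy)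
    rw [card_cycleType_eq_one.mpr hcyc, hsupp, card_univ, Fintype.card_fin] at hcount
    omega

theorem exists_isSwap_numCycles_mul_prod_eq_one :
    ∀ (k : ℕ) (σ : Perm (Fin n)), numCycles σ = k + 1 →
      ∃ τs : List (Perm (Fin n)), τs.length = k ∧ (∀ τ ∈ τs, τ.IsSwap) ∧
        numCycles (σ * τs.prod) = 1
  | 0, σ, h => ⟨[], rfl, by simp, by simpa using h⟩
  | k + 1, σ, h => by
    obtain ⟨x, y, hxy⟩ : ∃ x y, ¬σ.SameCycle x y := by
      by_contra! hall
      have := numCycles_le_one_of_forall_sameCycle hall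
      omega
    have hne : x ≠ y := fun e => hxy (e ▸ SameCycle.refl σ x)
    have hstep := numCycles_mul_swap hxy
    obtain ⟨τs, hlen, hswap, hone⟩ :=
      exists_isSwap_numCycles_mul_prod_eq_one k (σ * swap x y) (by omega)
    refine ⟨swap x y :: τs, by simp [hlen], ?_, by rwa [List.prod_cons, ← mul_assoc]⟩
    exact List.forall_mem_cons.mpr ⟨⟨x, y, hne, rfl⟩, hswap⟩

end NumCycles

section LongestSubsequences

variable {n : ℕ}

theorem bddAbove_card_incSeq (σ : Perm (Fin n)) :
    BddAbove {k | ∃ s : Finset (Fin n), IncSeq σ s ∧ #s = k} :=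
  ⟨n, by rintro k ⟨s, -, rfl⟩; simpa using card_le_univ s⟩

theorem IncSeq.card_le_lis {σ : Perm (Fin n)} {s : Finset (Fin n)} (hs : IncSeq σ s) :
    #s ≤ lis σ :=
  le_csSup (bddAbove_card_incSeq σ) ⟨s, hs, rfl⟩

theorem exists_incSeq_card_eq_lis (σ : Perm (Fin n)) : ∃ s, IncSeq σ s ∧ #s = lis σ :=
  Nat.sSup_mem (s := {k | ∃ s : Finset (Fin n), IncSeq σ s ∧ #s = k})
    ⟨0, ∅, fun i hi => absurd hi (notMem_empty i), card_empty⟩ (bddAbove_card_incSeq σ)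

theorem lis_le_lis_add_two_of_agree {σ π : Perm (Fin n)} {x y : Fin n}
    (h : ∀ a, a ≠ x → a ≠ y → π a = σ a) : lis σ ≤ lis π + 2 := by
  obtain ⟨s, hs, hcard⟩ := exists_incSeq_card_eq_lis σ
  have hinc : IncSeq π (s \ {x, y}) := fun i hi j hj hij => by
    simp only [mem_sdiff, mem_insert, mem_singleton, not_or] at hi hj
    rw [h i hi.2.1 hi.2.2, h j hj.2.1 hj.2.2]
    exact hs i hi.1 j hj.1 hij
  have := hinc.card_le_lis
  have : #s ≤ #(s \ {x, y}) + #{x, y} := card_le_card_sdiff_add_card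
  have : #({x, y} : Finset (Fin n)) ≤ 2 := card_le_two
  omega

theorem abs_lis_mul_swap_sub_le (σ : Perm (Fin n)) (x y : Fin n) :
    |(lis (σ * swap x y) : ℤ) - lis σ| ≤ 2 := by
  have h : ∀ a, a ≠ x → a ≠ y → (σ * swap x y) a = σ a := fun a hx hy => by
    rw [Perm.mul_apply, swap_apply_of_ne_of_ne hx hy]
  have := lis_le_lis_add_two_of_agree h
  have := lis_le_lis_add_two_of_agree fun a hx hy => (h a hx hy).symm
  rw [abs_le]
  omega

theorem abs_lis_mul_prod_sub_le (σ : Perm (Fin n)) (τs : List (Perm (Fin n)))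
    (h : ∀ τ ∈ τs, τ.IsSwap) :
    |(lis (σ * τs.prod) : ℤ) - lis σ| ≤ 2 * τs.length := by
  induction τs generalizing σ with
  | nil => simp
  | cons τ τs ih =>
    obtain ⟨x, y, -, rfl⟩ := h τ List.mem_cons_self
    have h₁ := ih (σ * swap x y) fun τ hτ => h τ (List.mem_cons_of_mem _ hτ)
    have h₂ := abs_lis_mul_swap_sub_le σ x y
    rw [List.prod_cons, ← mul_assoc, List.length_cons]
    calc |(lis (σ * swap x y * τs.prod) : ℤ) - lis σ|
        ≤ |(lis (σ * swap x y * τs.prod) : ℤ) - lis (σ * swap x y)|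
          + |(lis (σ * swap x y) : ℤ) - lis σ| := abs_sub_le _ _ _
      _ ≤ 2 * ↑(τs.length + 1) := by push_cast; linarith

theorem lds_eq_lis_revPerm_mul (σ : Perm (Fin n)) : lds σ = lis (Fin.revPerm * σ) := by
  have : ∀ s, DecSeq σ s ↔ IncSeq (Fin.revPerm * σ) s := fun s => by
    simp only [DecSeq, IncSeq, Perm.mul_apply, Fin.revPerm_apply, Fin.rev_lt_rev]
  simp only [lds, lis, this]

end LongestSubsequences

theorem stmt_1 (n : ℕ) (hn : 1 ≤ n) (σ : Equiv.Perm (Fin n)) :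
    ∃ τs : List (Equiv.Perm (Fin n)),
      τs.length = numCycles σ - 1 ∧
      (∀ τ ∈ τs, τ.IsSwap) ∧
      numCycles (σ * τs.prod) = 1 ∧
      |(lis (σ * τs.prod) : ℤ) - (lis σ : ℤ)| ≤ 2 * ((numCycles σ : ℤ) - 1) ∧
      |(lds (σ * τs.prod) : ℤ) - (lds σ : ℤ)| ≤ 2 * ((numCycles σ : ℤ) - 1) := by
  have h1 := one_le_numCycles hn σ
  obtain ⟨τs, hlen, hswap, hone⟩ :=
    exists_isSwap_numCycles_mul_prod_eq_one (numCycles σ - 1) σ (by omega)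
  have hlen' : (τs.length : ℤ) = numCycles σ - 1 := by omega
  refine ⟨τs, hlen, hswap, hone, ?_, ?_⟩
  · rw [← hlen']
    exact abs_lis_mul_prod_sub_le σ τs hswap
  · rw [← hlen', lds_eq_lis_revPerm_mul, lds_eq_lis_revPerm_mul, ← mul_assoc]
    exact abs_lis_mul_prod_sub_le (Fin.revPerm * σ) τs hswap
end
end

section
/- Let n ≥ 1, let σ be a permutation of {1,…,n}, let τ be a transposition in S_n, and let i ≥ 1. Then |M_i(σ) − M_i(σ∘τ)| ≤ 2 and |M'_i(σ) − M'_i(σ∘τ)| ≤ 2. -/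
noncomputable section

/-- `s` is a union of `k` increasing subsequences of `σ`. -/
def IsUnionInc {n : ℕ} (σ : Equiv.Perm (Fin n)) (k : ℕ) (s : Finset (Fin n)) : Prop :=
  ∃ f : Fin k → Finset (Fin n), (∀ t, IncSeq σ (f t)) ∧ s = Finset.univ.biUnion f

/-- `s` is a union of `k` decreasing subsequences of `σ`. -/
def IsUnionDec {n : ℕ} (σ : Equiv.Perm (Fin n)) (k : ℕ) (s : Finset (Fin n)) : Prop :=
  ∃ f : Fin k → Finset (Fin n), (∀ t, DecSeq σ (f t)) ∧ s = Finset.univ.biUnion f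

/-- M_k(σ): maximal cardinality of a union of `k` increasing subsequences of `σ`. -/
def Minc {n : ℕ} (σ : Equiv.Perm (Fin n)) (k : ℕ) : ℕ :=
  sSup {m | ∃ s : Finset (Fin n), IsUnionInc σ k s ∧ s.card = m}

/-- M'_k(σ): maximal cardinality of a union of `k` decreasing subsequences of `σ`. -/
def Mdec {n : ℕ} (σ : Equiv.Perm (Fin n)) (k : ℕ) : ℕ :=
  sSup {m | ∃ s : Finset (Fin n), IsUnionDec σ k s ∧ s.card = m}


lemma minc_le {n : ℕ} (σ : Equiv.Perm (Fin n)) (a b : Fin n) (k : ℕ) :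
    Minc σ k ≤ Minc (σ * Equiv.swap a b) k + 2 := by
  set S : Set ℕ := {m | ∃ s : Finset (Fin n), IsUnionInc σ k s ∧ s.card = m} with hS
  have hne : S.Nonempty := ⟨0, ∅, ⟨fun _ => ∅, fun t => by simp [IncSeq], by ext x; simp⟩, rfl⟩
  have hbdd : ∀ m ∈ S, m ≤ n := by
    rintro m ⟨s, _, rfl⟩
    simpa using s.card_le_univ
  have hmem : Minc σ k ∈ S := Nat.sSup_mem hne ⟨n, hbdd⟩
  obtain ⟨s, ⟨f, hf, hs⟩, hcard⟩ := hmem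
  set g : Fin k → Finset (Fin n) := fun t => f t \ {a, b} with hg
  have hginc : ∀ t, IncSeq (σ * Equiv.swap a b) (g t) := by
    intro t x hx y hy hxy
    simp only [hg, Finset.mem_sdiff, Finset.mem_insert, Finset.mem_singleton, not_or] at hx hy
    have := hf t x hx.1 y hy.1 hxy
    simpa [Equiv.Perm.mul_apply, Equiv.swap_apply_of_ne_of_ne hx.2.1 hx.2.2,
      Equiv.swap_apply_of_ne_of_ne hy.2.1 hy.2.2] using this
  have hs' : (s \ {a, b} : Finset (Fin n)) = Finset.univ.biUnion g := by
    ext x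
    simp only [hs, hg, Finset.mem_sdiff, Finset.mem_biUnion, Finset.mem_univ, true_and]
    tauto
  have hmem' : (s \ {a, b} : Finset (Fin n)).card ∈
      {m | ∃ s : Finset (Fin n), IsUnionInc (σ * Equiv.swap a b) k s ∧ s.card = m} :=
    ⟨s \ {a, b}, ⟨g, hginc, hs'⟩, rfl⟩
  have hle : (s \ {a, b} : Finset (Fin n)).card ≤ Minc (σ * Equiv.swap a b) k := by
    apply le_csSup ⟨n, ?_⟩ hmem'
    rintro m ⟨s, _, rfl⟩
    simpa using s.card_le_univ
  have h2 : s.card ≤ (s \ {a, b} : Finset (Fin n)).card + 2 := by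
    have := Finset.card_le_card_sdiff_add_card (s := s) (t := ({a, b} : Finset (Fin n)))
    have hc : ({a, b} : Finset (Fin n)).card ≤ 2 := Finset.card_insert_le a {b} |>.trans (by simp)
    omega
  omega


lemma mdec_le {n : ℕ} (σ : Equiv.Perm (Fin n)) (a b : Fin n) (k : ℕ) :
    Mdec σ k ≤ Mdec (σ * Equiv.swap a b) k + 2 := by
  set S : Set ℕ := {m | ∃ s : Finset (Fin n), IsUnionDec σ k s ∧ s.card = m} with hS
  have hne : S.Nonempty := ⟨0, ∅, ⟨fun _ => ∅, fun t => by simp [DecSeq], by ext x; simp⟩, rfl⟩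
  have hbdd : ∀ m ∈ S, m ≤ n := by
    rintro m ⟨s, _, rfl⟩
    simpa using s.card_le_univ
  have hmem : Mdec σ k ∈ S := Nat.sSup_mem hne ⟨n, hbdd⟩
  obtain ⟨s, ⟨f, hf, hs⟩, hcard⟩ := hmem
  set g : Fin k → Finset (Fin n) := fun t => f t \ {a, b} with hg
  have hgdec : ∀ t, DecSeq (σ * Equiv.swap a b) (g t) := by
    intro t x hx y hy hxy
    simp only [hg, Finset.mem_sdiff, Finset.mem_insert, Finset.mem_singleton, not_or] at hx hy
    have := hf t x hx.1 y hy.1 hxy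
    simpa [Equiv.Perm.mul_apply, Equiv.swap_apply_of_ne_of_ne hx.2.1 hx.2.2,
      Equiv.swap_apply_of_ne_of_ne hy.2.1 hy.2.2] using this
  have hs' : (s \ {a, b} : Finset (Fin n)) = Finset.univ.biUnion g := by
    ext x
    simp only [hs, hg, Finset.mem_sdiff, Finset.mem_biUnion, Finset.mem_univ, true_and]
    tauto
  have hmem' : (s \ {a, b} : Finset (Fin n)).card ∈
      {m | ∃ s : Finset (Fin n), IsUnionDec (σ * Equiv.swap a b) k s ∧ s.card = m} :=
    ⟨s \ {a, b}, ⟨g, hgdec, hs'⟩, rfl⟩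
  have hle : (s \ {a, b} : Finset (Fin n)).card ≤ Mdec (σ * Equiv.swap a b) k := by
    apply le_csSup ⟨n, ?_⟩ hmem'
    rintro m ⟨s, _, rfl⟩
    simpa using s.card_le_univ
  have h2 : s.card ≤ (s \ {a, b} : Finset (Fin n)).card + 2 := by
    have := Finset.card_le_card_sdiff_add_card (s := s) (t := ({a, b} : Finset (Fin n)))
    have hc : ({a, b} : Finset (Fin n)).card ≤ 2 := Finset.card_insert_le a {b} |>.trans (by simp)
    omega
  omega


theorem stmt_3 (n : ℕ) (hn : 1 ≤ n) (σ τ : Equiv.Perm (Fin n)) (hτ : τ.IsSwap)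
    (i : ℕ) (hi : 1 ≤ i) :
    |(Minc σ i : ℤ) - (Minc (σ * τ) i : ℤ)| ≤ 2 ∧
    |(Mdec σ i : ℤ) - (Mdec (σ * τ) i : ℤ)| ≤ 2 := by
  obtain ⟨a, b, hab, rfl⟩ := hτ
  have hss : σ * Equiv.swap a b * Equiv.swap a b = σ := by
    rw [mul_assoc, Equiv.swap_mul_self, mul_one]
  have h1 := minc_le σ a b i
  have h2 := minc_le (σ * Equiv.swap a b) a b i
  rw [hss] at h2
  have h3 := mdec_le σ a b i
  have h4 := mdec_le (σ * Equiv.swap a b) a b i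
  rw [hss] at h4
  constructor <;> rw [abs_sub_le_iff] <;> constructor <;> push_cast <;> omega
end
end

section
/- Let n ≥ 1, let σ be a permutation of {1,…,n}, let τ be a transposition in S_n, and let i ≥ 1. Setting λ_i(σ) := M_i(σ) − M_{i−1}(σ) and λ'_i(σ) := M'_i(σ) − M'_{i−1}(σ), one has |λ_i(σ) − λ_i(σ∘τ)| ≤ 4 and |λ'_i(σ) − λ'_i(σ∘τ)| ≤ 4. -/
noncomputable section

lemma inc_set_nonempty {n k : ℕ} (σ : Equiv.Perm (Fin n)) :
    {m | ∃ s : Finset (Fin n), IsUnionInc σ k s ∧ s.card = m}.Nonempty :=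
  ⟨0, ∅, ⟨fun _ => ∅, fun t i hi => absurd hi (Finset.notMem_empty i), by ext x; simp⟩, rfl⟩

lemma dec_set_nonempty {n k : ℕ} (σ : Equiv.Perm (Fin n)) :
    {m | ∃ s : Finset (Fin n), IsUnionDec σ k s ∧ s.card = m}.Nonempty :=
  ⟨0, ∅, ⟨fun _ => ∅, fun t i hi => absurd hi (Finset.notMem_empty i), by ext x; simp⟩, rfl⟩

lemma inc_bdd {n k : ℕ} (σ : Equiv.Perm (Fin n)) :
    BddAbove {m | ∃ s : Finset (Fin n), IsUnionInc σ k s ∧ s.card = m} := by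
  refine ⟨n, fun m hm => ?_⟩
  obtain ⟨s, -, rfl⟩ := hm
  simpa using Finset.card_le_univ s

lemma dec_bdd {n k : ℕ} (σ : Equiv.Perm (Fin n)) :
    BddAbove {m | ∃ s : Finset (Fin n), IsUnionDec σ k s ∧ s.card = m} := by
  refine ⟨n, fun m hm => ?_⟩
  obtain ⟨s, -, rfl⟩ := hm
  simpa using Finset.card_le_univ s

lemma Minc_mem {n k : ℕ} (σ : Equiv.Perm (Fin n)) :
    Minc σ k ∈ {m | ∃ s : Finset (Fin n), IsUnionInc σ k s ∧ s.card = m} :=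
  Nat.sSup_mem (inc_set_nonempty σ) (inc_bdd σ)

lemma Mdec_mem {n k : ℕ} (σ : Equiv.Perm (Fin n)) :
    Mdec σ k ∈ {m | ∃ s : Finset (Fin n), IsUnionDec σ k s ∧ s.card = m} :=
  Nat.sSup_mem (dec_set_nonempty σ) (dec_bdd σ)

lemma Minc_swap_le {n k : ℕ} (σ : Equiv.Perm (Fin n)) (a b : Fin n) :
    Minc σ k ≤ Minc (σ * Equiv.swap a b) k + 2 := by
  obtain ⟨s, ⟨f, hf, hs⟩, hcard⟩ := Minc_mem (k := k) σ
  set s' : Finset (Fin n) := s \ {a, b} with hs'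
  have hmem : s'.card ∈ {m | ∃ t : Finset (Fin n), IsUnionInc (σ * Equiv.swap a b) k t ∧ t.card = m} := by
    refine ⟨s', ⟨fun t => f t \ {a, b}, ?_, ?_⟩, rfl⟩
    · intro t x hx y hy hxy
      simp only [Finset.mem_sdiff, Finset.mem_insert, Finset.mem_singleton] at hx hy
      push_neg at hx hy
      have hx' : Equiv.swap a b x = x := Equiv.swap_apply_of_ne_of_ne hx.2.1 hx.2.2
      have hy' : Equiv.swap a b y = y := Equiv.swap_apply_of_ne_of_ne hy.2.1 hy.2.2
      simpa [Equiv.Perm.mul_apply, hx', hy'] using hf t x hx.1 y hy.1 hxy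
    · ext x
      simp only [hs', hs, Finset.mem_sdiff, Finset.mem_biUnion, Finset.mem_univ, true_and]
      tauto
  have h1 : s'.card ≤ Minc (σ * Equiv.swap a b) k :=
    le_csSup (inc_bdd (σ * Equiv.swap a b)) hmem
  have h2 : s.card ≤ s'.card + 2 := by
    calc s.card ≤ (s ∪ {a, b}).card := Finset.card_le_card Finset.subset_union_left
    _ = s'.card + ({a, b} : Finset (Fin n)).card := (Finset.card_sdiff_add_card s {a,b}).symm
    _ ≤ s'.card + 2 := by
        have : ({a, b} : Finset (Fin n)).card ≤ 2 :=
          (Finset.card_insert_le a {b}).trans (by simp)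
        omega
  omega

lemma Mdec_swap_le {n k : ℕ} (σ : Equiv.Perm (Fin n)) (a b : Fin n) :
    Mdec σ k ≤ Mdec (σ * Equiv.swap a b) k + 2 := by
  obtain ⟨s, ⟨f, hf, hs⟩, hcard⟩ := Mdec_mem (k := k) σ
  set s' : Finset (Fin n) := s \ {a, b} with hs'
  have hmem : s'.card ∈ {m | ∃ t : Finset (Fin n), IsUnionDec (σ * Equiv.swap a b) k t ∧ t.card = m} := by
    refine ⟨s', ⟨fun t => f t \ {a, b}, ?_, ?_⟩, rfl⟩
    · intro t x hx y hy hxy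
      simp only [Finset.mem_sdiff, Finset.mem_insert, Finset.mem_singleton] at hx hy
      push_neg at hx hy
      have hx' : Equiv.swap a b x = x := Equiv.swap_apply_of_ne_of_ne hx.2.1 hx.2.2
      have hy' : Equiv.swap a b y = y := Equiv.swap_apply_of_ne_of_ne hy.2.1 hy.2.2
      simpa [Equiv.Perm.mul_apply, hx', hy'] using hf t x hx.1 y hy.1 hxy
    · ext x
      simp only [hs', hs, Finset.mem_sdiff, Finset.mem_biUnion, Finset.mem_univ, true_and]
      tauto
  have h1 : s'.card ≤ Mdec (σ * Equiv.swap a b) k :=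
    le_csSup (dec_bdd (σ * Equiv.swap a b)) hmem
  have h2 : s.card ≤ s'.card + 2 := by
    calc s.card ≤ (s ∪ {a, b}).card := Finset.card_le_card Finset.subset_union_left
    _ = s'.card + ({a, b} : Finset (Fin n)).card := (Finset.card_sdiff_add_card s {a,b}).symm
    _ ≤ s'.card + 2 := by
        have : ({a, b} : Finset (Fin n)).card ≤ 2 :=
          (Finset.card_insert_le a {b}).trans (by simp)
        omega
  omega

theorem stmt_4 (n : ℕ) (hn : 1 ≤ n) (σ τ : Equiv.Perm (Fin n)) (hτ : τ.IsSwap)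
    (i : ℕ) (hi : 1 ≤ i) :
    |((Minc σ i : ℤ) - (Minc σ (i - 1) : ℤ)) -
        ((Minc (σ * τ) i : ℤ) - (Minc (σ * τ) (i - 1) : ℤ))| ≤ 4 ∧
    |((Mdec σ i : ℤ) - (Mdec σ (i - 1) : ℤ)) -
        ((Mdec (σ * τ) i : ℤ) - (Mdec (σ * τ) (i - 1) : ℤ))| ≤ 4 := by
  obtain ⟨a, b, hab, rfl⟩ := hτ
  have key : σ * Equiv.swap a b * Equiv.swap a b = σ := by
    rw [mul_assoc, Equiv.swap_mul_self, mul_one]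
  have h1 := Minc_swap_le (k := i) σ a b
  have h2 := Minc_swap_le (k := i - 1) σ a b
  have h3 := Minc_swap_le (k := i) (σ * Equiv.swap a b) a b
  have h4 := Minc_swap_le (k := i - 1) (σ * Equiv.swap a b) a b
  rw [key] at h3 h4
  have g1 := Mdec_swap_le (k := i) σ a b
  have g2 := Mdec_swap_le (k := i - 1) σ a b
  have g3 := Mdec_swap_le (k := i) (σ * Equiv.swap a b) a b
  have g4 := Mdec_swap_le (k := i - 1) (σ * Equiv.swap a b) a b
  rw [key] at g3 g4
  constructor <;> rw [abs_le] <;> constructor <;> push_cast <;> omega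
end
end

section
/- Let λ = (λ_1 ≥ λ_2 ≥ … ≥ 0) and μ = (μ_1 ≥ μ_2 ≥ … ≥ 0) be partitions (of possibly different integers n and m). Then for every i ∈ ℤ, (f_λ(i) − f_μ(i))² ≤ 8·max_{j ≥ 1} |Σ_{k=1}^{j} (λ_k − μ_k)|. -/
/-!
Let `a` and `b` count the rows `k` with `λ_k - k ≥ i`, resp. `μ_k - k ≥ i`; these rows form an
initial segment, and `f_λ(i) - f_μ(i) = 2 (a - b)`. If `b ≤ a`, each of the `a - b` rows
`b < k ≤ a` has `λ_k ≥ i + a` and `μ_k ≤ i + b`, so the partial sums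
`S_j = Σ_{k ≤ j} (λ_k - μ_k)` satisfy `(a - b)² ≤ S_a - S_b ≤ 2 max_j |S_j|`.
-/

noncomputable section

/-- The profile of a partition `l` (0-based indexing: `l k` is the row λ_{k+1}):
`f_λ(i) = i + 2·|{k ≥ 1 : λ_k − k ≥ i}|`. -/
def profile (l : ℕ → ℕ) (i : ℤ) : ℤ :=
  i + 2 * (Set.ncard {k : ℕ | i ≤ (l k : ℤ) - ((k : ℤ) + 1)} : ℤ)

theorem IsLowerSet.eq_Iio_ncard {s : Set ℕ} (hs : IsLowerSet s) (hfin : s.Finite) :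
    s = Set.Iio s.ncard := by
  obtain rfl | ⟨a, rfl⟩ := hs.eq_univ_or_Iio
  · exact absurd hfin Set.infinite_univ
  · simp

theorem sq_le_sum_Ico_of_le {d : ℕ → ℤ} {a b : ℕ} (hba : b ≤ a)
    (hd : ∀ k ∈ Finset.Ico b a, (a : ℤ) - b ≤ d k) :
    ((a : ℤ) - b) ^ 2 ≤ ∑ k ∈ Finset.Ico b a, d k := by
  have h := Finset.card_nsmul_le_sum _ _ _ hd
  rwa [Nat.card_Ico, nsmul_eq_mul, Nat.cast_sub hba, ← sq] at h

theorem abs_sum_range_le_sSup {d : ℕ → ℤ} (hd : ∃ N, ∀ k ≥ N, d k = 0) (j : ℕ) :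
    |∑ k ∈ Finset.range j, d k| ≤
      sSup {t : ℤ | ∃ j : ℕ, 1 ≤ j ∧ t = |∑ k ∈ Finset.range j, d k|} := by
  obtain ⟨N, hN⟩ := hd
  set S : ℕ → ℤ := fun j => ∑ k ∈ Finset.range j, d k
  have hS : ∀ j, S j = S (min j N) := by
    intro j
    rcases le_total j N with h | h
    · rw [min_eq_left h]
    · rw [min_eq_right h, ← sub_eq_zero, ← Finset.sum_Ico_eq_sub _ h]
      exact Finset.sum_eq_zero fun k hk => hN k (Finset.mem_Ico.mp hk).1
  have hbdd : BddAbove {t : ℤ | ∃ j : ℕ, 1 ≤ j ∧ t = |S j|} := by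
    refine ((Set.finite_Iic N).image fun j => |S j|).bddAbove.mono ?_
    rintro _ ⟨j, -, rfl⟩
    exact ⟨min j N, min_le_right j N, congrArg abs (hS j).symm⟩
  rcases Nat.eq_zero_or_pos j with rfl | hj
  · exact (abs_nonneg _).trans (le_csSup hbdd ⟨1, le_rfl, rfl⟩)
  · exact le_csSup hbdd ⟨j, hj, rfl⟩

def profileRows (l : ℕ → ℕ) (i : ℤ) : Set ℕ :=
  {k : ℕ | i ≤ (l k : ℤ) - ((k : ℤ) + 1)}

theorem profile_eq (l : ℕ → ℕ) (i : ℤ) :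
    profile l i = i + 2 * ((profileRows l i).ncard : ℤ) :=
  rfl

theorem isLowerSet_profileRows {l : ℕ → ℕ} {i : ℤ} (hl : Antitone l) :
    IsLowerSet (profileRows l i) := by
  intro k j hjk hk
  have : (l k : ℤ) ≤ l j := by exact_mod_cast hl hjk
  simp only [profileRows, Set.mem_ofPred_eq] at hk ⊢
  omega

theorem finite_profileRows {l : ℕ → ℕ} {i : ℤ} (hl0 : ∃ N, ∀ k ≥ N, l k = 0) :
    (profileRows l i).Finite := by
  obtain ⟨N, hN⟩ := hl0
  refine (Set.finite_Iio (N + i.natAbs)).subset fun k hk => ?_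
  by_contra hkN
  simp only [profileRows, Set.mem_ofPred_eq, Set.mem_Iio, not_lt] at hk hkN
  rw [hN k (by omega)] at hk
  omega

theorem mem_profileRows_iff {l : ℕ → ℕ} {i : ℤ} (hl : Antitone l)
    (hl0 : ∃ N, ∀ k ≥ N, l k = 0) {k : ℕ} :
    k ∈ profileRows l i ↔ k < (profileRows l i).ncard := by
  conv_lhs => rw [(isLowerSet_profileRows hl).eq_Iio_ncard (finite_profileRows hl0)]
  rfl

theorem add_ncard_profileRows_le {l : ℕ → ℕ} {i : ℤ} (hl : Antitone l)
    (hl0 : ∃ N, ∀ k ≥ N, l k = 0) {k : ℕ} (hk : k < (profileRows l i).ncard) :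
    i + (profileRows l i).ncard ≤ l k := by
  set a := (profileRows l i).ncard
  have hmem : a - 1 ∈ profileRows l i := (mem_profileRows_iff hl hl0).2 (by omega)
  have : (l (a - 1) : ℤ) ≤ l k := by exact_mod_cast hl (by omega : k ≤ a - 1)
  simp only [profileRows, Set.mem_ofPred_eq] at hmem
  omega

theorem le_add_ncard_profileRows {l : ℕ → ℕ} {i : ℤ} (hl : Antitone l)
    (hl0 : ∃ N, ∀ k ≥ N, l k = 0) {k : ℕ} (hk : (profileRows l i).ncard ≤ k) :
    l k ≤ i + (profileRows l i).ncard := by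
  set a := (profileRows l i).ncard
  have hmem : a ∉ profileRows l i := fun h => (lt_irrefl a) ((mem_profileRows_iff hl hl0).1 h)
  have : (l k : ℤ) ≤ l a := by exact_mod_cast hl hk
  simp only [profileRows, Set.mem_ofPred_eq] at hmem
  omega

theorem sq_sub_ncard_profileRows_le {l m : ℕ → ℕ} (hl : Antitone l)
    (hl0 : ∃ N, ∀ k ≥ N, l k = 0) (hm : Antitone m) (hm0 : ∃ N, ∀ k ≥ N, m k = 0)
    (i : ℤ) :
    (((profileRows l i).ncard : ℤ) - (profileRows m i).ncard) ^ 2 ≤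
      |∑ k ∈ Finset.range (profileRows l i).ncard, ((l k : ℤ) - m k) -
        ∑ k ∈ Finset.range (profileRows m i).ncard, ((l k : ℤ) - m k)| := by
  set a := (profileRows l i).ncard
  set b := (profileRows m i).ncard
  rcases le_total b a with hba | hab
  · rw [← Finset.sum_Ico_eq_sub _ hba]
    refine (sq_le_sum_Ico_of_le hba fun k hk => ?_).trans (le_abs_self _)
    obtain ⟨hbk, hka⟩ := Finset.mem_Ico.mp hk
    have := add_ncard_profileRows_le hl hl0 hka
    have := le_add_ncard_profileRows hm hm0 hbk
    omega
  · rw [abs_sub_comm, ← Finset.sum_Ico_eq_sub _ hab, ← abs_neg, ← Finset.sum_neg_distrib,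
      ← neg_sub, neg_sq]
    refine (sq_le_sum_Ico_of_le hab fun k hk => ?_).trans (le_abs_self _)
    obtain ⟨hak, hkb⟩ := Finset.mem_Ico.mp hk
    have := add_ncard_profileRows_le hm hm0 hkb
    have := le_add_ncard_profileRows hl hl0 hak
    omega

theorem stmt_6 (l m : ℕ → ℕ)
    (hl : ∀ k, l (k + 1) ≤ l k) (hl0 : ∃ N, ∀ k ≥ N, l k = 0)
    (hm : ∀ k, m (k + 1) ≤ m k) (hm0 : ∃ N, ∀ k ≥ N, m k = 0) :
    ∀ i : ℤ, (profile l i - profile m i) ^ 2 ≤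
      8 * sSup {t : ℤ | ∃ j : ℕ, 1 ≤ j ∧
        t = |∑ k ∈ Finset.range j, ((l k : ℤ) - (m k : ℤ))|} := by
  intro i
  obtain ⟨Nl, hNl⟩ := hl0
  obtain ⟨Nm, hNm⟩ := hm0
  have hd : ∃ N, ∀ k ≥ N, (l k : ℤ) - m k = 0 :=
    ⟨max Nl Nm, fun k hk => by
      simp [hNl k (le_of_max_le_left hk), hNm k (le_of_max_le_right hk)]⟩
  have hcross := sq_sub_ncard_profileRows_le (antitone_nat_of_succ_le hl) ⟨Nl, hNl⟩
    (antitone_nat_of_succ_le hm) ⟨Nm, hNm⟩ i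
  have hsplit := abs_sub (∑ k ∈ Finset.range (profileRows l i).ncard, ((l k : ℤ) - m k))
    (∑ k ∈ Finset.range (profileRows m i).ncard, ((l k : ℤ) - m k))
  have hSa := abs_sum_range_le_sSup hd (profileRows l i).ncard
  have hSb := abs_sum_range_le_sSup hd (profileRows m i).ncard
  rw [profile_eq, profile_eq]
  nlinarith
end
end

section
/- Let n ≥ 2 and let p be a probability measure on the symmetric group S_n that is invariant under conjugation. Then the probability p({σ : i ∈ D(σ)}) is the same for all i ∈ {1,…,n−1}. -/
noncomputable section

/-- `i ∈ D(σ)` for 1-based `i ∈ {1,…,n−1}`: `σ(i+1) < σ(i)`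
(positions `i`, `i+1` are the 0-based indices `i−1`, `i`). -/
def descentAt {n : ℕ} (σ : Equiv.Perm (Fin n)) (i : ℕ) : Prop :=
  ∃ (h1 : i - 1 < n) (h2 : i < n), σ ⟨i, h2⟩ < σ ⟨i - 1, h1⟩

/-- The probability of the event `P` under the probability mass function `p` on `S_n`. -/
def permProb {n : ℕ} (p : Equiv.Perm (Fin n) → ℝ) (P : Equiv.Perm (Fin n) → Prop) : ℝ :=
  ∑ σ, Set.indicator {σ' | P σ'} p σ

/-! Conjugating by the rotation `c : k ↦ k + 1 (mod n)` moves the positions `k, k + 1` to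
`k + 1, k + 2` and relabels the values by `c`. Since `c` is monotone except that it sends the
largest value `n - 1` to `0`, the event `σ(k+1) < σ(k)` changes only by the events
`σ(k) = n - 1` and `σ(k+1) = n - 1`, which are equally likely by conjugating with the
transposition of `k` and `k + 1`. -/

open Equiv

section permProb

variable {n : ℕ} {p : Perm (Fin n) → ℝ}

lemma permProb_or {P Q : Perm (Fin n) → Prop} (h : ∀ σ, ¬(P σ ∧ Q σ)) :
    permProb p (fun σ => P σ ∨ Q σ) = permProb p P + permProb p Q := by
  unfold permProb
  rw [← Finset.sum_add_distrib, Set.ofPred_or,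
    Set.indicator_union_of_disjoint (s := {σ | P σ}) (t := {σ | Q σ})
      (Set.disjoint_left.2 fun σ hP hQ => h σ ⟨hP, hQ⟩)]

lemma permProb_conj (hinv : ∀ σ ρ : Perm (Fin n), p (ρ⁻¹ * σ * ρ) = p σ)
    (ρ : Perm (Fin n)) (P : Perm (Fin n) → Prop) :
    permProb p (fun σ => P (ρ⁻¹ * σ * ρ)) = permProb p P := by
  unfold permProb
  refine Fintype.sum_equiv (MulAut.conj ρ⁻¹).toEquiv _ _ fun σ => ?_
  classical
  rw [Set.indicator_apply, Set.indicator_apply]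
  simp [hinv]

lemma permProb_apply_eq_of_ne_of_ne (hinv : ∀ σ ρ : Perm (Fin n), p (ρ⁻¹ * σ * ρ) = p σ)
    {x y w : Fin n} (hx : x ≠ w) (hy : y ≠ w) :
    permProb p (fun σ => σ x = w) = permProb p (fun σ => σ y = w) := by
  rw [← permProb_conj hinv (swap x y)]
  simp [Perm.mul_apply, swap_apply_eq_iff, swap_apply_of_ne_of_ne hx.symm hy.symm]

end permProb

lemma finRotate_lt_finRotate_or_eq_last_iff {m : ℕ} (u v : Fin (m + 1)) :
    finRotate _ u < finRotate _ v ∨ v = Fin.last m ↔ u < v ∨ u = Fin.last m := by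
  simp only [Fin.lt_def, coe_finRotate, Fin.ext_iff, Fin.val_last]
  split_ifs <;> omega

lemma permProb_finRotate_lt_finRotate {m : ℕ} {p : Perm (Fin (m + 1)) → ℝ}
    (hinv : ∀ σ ρ : Perm (Fin (m + 1)), p (ρ⁻¹ * σ * ρ) = p σ)
    {x y : Fin (m + 1)} (hx : x ≠ Fin.last m) (hy : y ≠ Fin.last m) :
    permProb p (fun σ => σ (finRotate _ y) < σ (finRotate _ x)) =
      permProb p (fun σ => σ y < σ x) := by
  set c := finRotate (m + 1)
  have hrot : permProb p (fun σ => σ (c y) < σ (c x)) =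
      permProb p (fun σ => c (σ y) < c (σ x)) := by
    rw [← permProb_conj hinv c⁻¹ (fun σ => σ (c y) < σ (c x))]
    simp [Perm.mul_apply]
  have hsplit : permProb p (fun σ => c (σ y) < c (σ x)) + permProb p (fun σ => σ x = Fin.last m) =
      permProb p (fun σ => σ y < σ x) + permProb p (fun σ => σ y = Fin.last m) := by
    rw [← permProb_or, ← permProb_or]
    · simp only [c, finRotate_lt_finRotate_or_eq_last_iff]
    · rintro σ ⟨hlt, hlast⟩
      exact (hlast ▸ hlt).not_ge (Fin.le_last _)
    · rintro σ ⟨hlt, hlast⟩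
      rw [hlast, finRotate_last] at hlt
      exact Fin.not_lt_zero _ hlt
  rw [hrot]
  linarith [permProb_apply_eq_of_ne_of_ne hinv hx hy]

lemma descentAt_succ_iff {n : ℕ} {σ : Perm (Fin n)} {k : ℕ} (hk : k + 1 < n) :
    descentAt σ (k + 1) ↔ σ ⟨k + 1, hk⟩ < σ ⟨k, by omega⟩ :=
  ⟨fun ⟨_, _, h⟩ => h, fun h => ⟨_, hk, h⟩⟩

lemma permProb_descentAt_succ {n : ℕ} {p : Perm (Fin n) → ℝ}
    (hinv : ∀ σ ρ : Perm (Fin n), p (ρ⁻¹ * σ * ρ) = p σ) {k : ℕ} (hk : k + 2 < n) :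
    permProb p (fun σ => descentAt σ (k + 2)) = permProb p (fun σ => descentAt σ (k + 1)) := by
  obtain ⟨m, rfl⟩ : ∃ m, n = m + 1 := ⟨n - 1, by omega⟩
  have hx : (⟨k, by omega⟩ : Fin (m + 1)) ≠ Fin.last m := by simp [Fin.ext_iff]; omega
  have hy : (⟨k + 1, by omega⟩ : Fin (m + 1)) ≠ Fin.last m := by simp [Fin.ext_iff]; omega
  have hcx : finRotate _ ⟨k, by omega⟩ = (⟨k + 1, by omega⟩ : Fin (m + 1)) :=
    Fin.ext (coe_finRotate_of_ne_last hx)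
  have hcy : finRotate _ ⟨k + 1, by omega⟩ = (⟨k + 2, hk⟩ : Fin (m + 1)) :=
    Fin.ext (coe_finRotate_of_ne_last hy)
  simp only [descentAt_succ_iff hk, descentAt_succ_iff (by omega : k + 1 < m + 1)]
  rw [← permProb_finRotate_lt_finRotate hinv hx hy, hcx, hcy]

theorem stmt_9_general (n : ℕ) (p : Equiv.Perm (Fin n) → ℝ)
    (hinv : ∀ σ ρ : Equiv.Perm (Fin n), p (ρ⁻¹ * σ * ρ) = p σ) :
    ∀ i j : ℕ, 1 ≤ i → i ≤ n - 1 → 1 ≤ j → j ≤ n - 1 →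
      permProb p (fun σ => descentAt σ i) = permProb p (fun σ => descentAt σ j) := by
  have hconst : ∀ i, 1 ≤ i → i ≤ n - 1 →
      permProb p (fun σ => descentAt σ i) = permProb p (fun σ => descentAt σ 1) := by
    intro i hi
    induction i, hi using Nat.le_induction with
    | base => exact fun _ => rfl
    | succ k hk ih =>
      intro hkn
      obtain ⟨l, rfl⟩ : ∃ l, k = l + 1 := ⟨k - 1, by omega⟩
      rw [permProb_descentAt_succ hinv (by omega), ih (by omega)]
  intro i j hi hin hj hjn
  rw [hconst i hi hin, hconst j hj hjn]

theorem stmt_9 (n : ℕ) (hn : 2 ≤ n) (p : Equiv.Perm (Fin n) → ℝ)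
    (hpos : ∀ σ, 0 ≤ p σ) (hsum : ∑ σ, p σ = 1)
    (hinv : ∀ σ ρ : Equiv.Perm (Fin n), p (ρ⁻¹ * σ * ρ) = p σ) :
    ∀ i j : ℕ, 1 ≤ i → i ≤ n - 1 → 1 ≤ j → j ≤ n - 1 →
      permProb p (fun σ => descentAt σ i) = permProb p (fun σ => descentAt σ j) :=
  stmt_9_general n p hinv
end
end

section
/- Let m ≥ 1, let n > m+2, let A' = {1,…,m+1}, and let p be a probability measure on the symmetric group S_n that is invariant under conjugation. Then p({σ : σ(A') ∩ A' = ∅}) ≥ 1 − (m+1)·( p({σ : σ(1)=1}) + m·(1 − p({σ : σ(1)=1}))/(n−1) ). -/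
noncomputable section

lemma permProb_eq_sum_ite {n : ℕ} (p : Equiv.Perm (Fin n) → ℝ) (P : Equiv.Perm (Fin n) → Prop)
    [DecidablePred P] :
    permProb p P = ∑ σ, if P σ then p σ else 0 := by
  unfold permProb
  refine Finset.sum_congr rfl fun σ _ => ?_
  by_cases h : P σ
  · rw [Set.indicator_of_mem (by exact h), if_pos h]
  · rw [Set.indicator_of_notMem (by exact h), if_neg h]

-- existence of a permutation mapping one distinct pair to another
lemma exists_perm_pair {α : Type*} [DecidableEq α] {i j k l : α} (hij : i ≠ j) (hkl : k ≠ l) :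
    ∃ ρ : Equiv.Perm α, ρ k = i ∧ ρ l = j := by
  classical
  set ρ₁ := Equiv.swap k i with hρ₁
  set l' := ρ₁ l with hl'
  have hl'i : l' ≠ i := by
    intro h
    apply hkl
    have : ρ₁ l = ρ₁ k := by
      rw [← hl', h]
      exact (Equiv.swap_apply_left k i).symm
    exact (ρ₁.injective this).symm
  refine ⟨Equiv.swap l' j * ρ₁, ?_, ?_⟩
  · have : ρ₁ k = i := Equiv.swap_apply_left k i
    simp only [Equiv.Perm.mul_apply, this]
    exact Equiv.swap_apply_of_ne_of_ne hl'i.symm hij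
  · simp only [Equiv.Perm.mul_apply, ← hl']
    exact Equiv.swap_apply_left l' j

theorem stmt_13 (m n : ℕ) (hm : 1 ≤ m) (hn : m + 2 < n)
    (p : Equiv.Perm (Fin n) → ℝ)
    (hpos : ∀ σ, 0 ≤ p σ) (hsum : ∑ σ, p σ = 1)
    (hinv : ∀ σ ρ : Equiv.Perm (Fin n), p (ρ⁻¹ * σ * ρ) = p σ) :
    -- p({σ : σ(A') ∩ A' = ∅}) ≥ 1 − (m+1)(p₁ + m(1−p₁)/(n−1)),  A' = {1,…,m+1}
    1 - (m + 1 : ℝ) * (permProb p (fun σ => σ ⟨0, by omega⟩ = ⟨0, by omega⟩)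
        + m * (1 - permProb p (fun σ => σ ⟨0, by omega⟩ = ⟨0, by omega⟩)) / ((n : ℝ) - 1))
      ≤ permProb p (fun σ => ∀ i : Fin n, (i : ℕ) < m + 1 → m + 1 ≤ (σ i : ℕ)) := by
  classical
  have h0n : 0 < n := by omega
  have h1n : 1 < n := by omega
  set i0 : Fin n := ⟨0, by omega⟩ with hi0
  set i1 : Fin n := ⟨1, by omega⟩ with hi1
  have hi01 : i0 ≠ i1 := by simp [hi0, hi1, Fin.ext_iff]
  -- the matrix of transition probabilities
  set q : Fin n → Fin n → ℝ := fun i j => ∑ σ, if σ i = j then p σ else 0 with hq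
  -- conjugation equates entries
  have key : ∀ (i j k l : Fin n) (ρ : Equiv.Perm (Fin n)), ρ k = i → ρ l = j → q i j = q k l := by
    intro i j k l ρ hk hl
    refine Fintype.sum_equiv ((Equiv.mulRight ρ).trans (Equiv.mulLeft ρ⁻¹))
      (fun σ => if σ i = j then p σ else 0) (fun τ => if τ k = l then p τ else 0) ?_
    intro σ
    have h1 : ((Equiv.mulRight ρ).trans (Equiv.mulLeft ρ⁻¹)) σ = ρ⁻¹ * σ * ρ := by
      simp [Equiv.mulRight, Equiv.mulLeft, mul_assoc]
    rw [h1]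
    show (if σ i = j then p σ else 0) = (if (ρ⁻¹ * σ * ρ) k = l then p (ρ⁻¹ * σ * ρ) else 0)
    have h2 : (ρ⁻¹ * σ * ρ) k = l ↔ σ i = j := by
      constructor
      · intro h
        have := congrArg ρ h
        simpa [hk, hl, Equiv.Perm.mul_apply] using this
      · intro h
        simp [Equiv.Perm.mul_apply, hk, h, ← hl]
    by_cases h : σ i = j
    · rw [if_pos h, if_pos (h2.mpr h), hinv]
    · rw [if_neg h, if_neg (fun hc => h (h2.mp hc))]
  have hdiag : ∀ i : Fin n, q i i = q i0 i0 :=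
    fun i => key i i i0 i0 (Equiv.swap i0 i) (Equiv.swap_apply_left i0 i)
      (Equiv.swap_apply_left i0 i)
  have hoff : ∀ i j : Fin n, i ≠ j → q i j = q i0 i1 := by
    intro i j hij
    obtain ⟨ρ, h1, h2⟩ := exists_perm_pair hij hi01
    exact key i j i0 i1 ρ h1 h2
  set q0 : ℝ := q i0 i0 with hq0
  set r : ℝ := q i0 i1 with hr
  -- nonnegativity of entries
  have hqnn : ∀ i j, 0 ≤ q i j := by
    intro i j
    refine Finset.sum_nonneg fun σ _ => ?_
    split <;> [exact hpos σ; exact le_rfl]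
  -- row sums
  have hrow : ∀ i : Fin n, ∑ j, q i j = 1 := by
    intro i
    rw [hq]
    rw [Finset.sum_comm]
    calc ∑ σ, ∑ j, (if σ i = j then p σ else 0)
        = ∑ σ : Equiv.Perm (Fin n), p σ := by
          refine Finset.sum_congr rfl fun σ _ => ?_
          simp [Finset.sum_ite_eq]
      _ = 1 := hsum
  -- 1 = q0 + (n-1) r
  have hbalance : q0 + ((n : ℝ) - 1) * r = 1 := by
    have h1 : ∑ j ∈ Finset.univ.erase i0, q i0 j = ((n : ℝ) - 1) * r := by
      have : ∀ j ∈ Finset.univ.erase i0, q i0 j = r := by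
        intro j hj
        have hji : j ≠ i0 := Finset.ne_of_mem_erase hj
        exact hoff i0 j (fun h => hji h.symm)
      rw [Finset.sum_congr rfl this, Finset.sum_const, Finset.card_erase_of_mem (Finset.mem_univ _)]
      simp only [Finset.card_univ, Fintype.card_perm]
      rw [nsmul_eq_mul]
      congr 1
      have : (Fintype.card (Fin n)) - 1 = n - 1 := by simp
      rw [Fintype.card_fin]
      push_cast [Nat.cast_sub (by omega : 1 ≤ n)]
      ring
    have h2 := hrow i0
    rw [← Finset.add_sum_erase _ _ (Finset.mem_univ i0)] at h2
    rw [h1] at h2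
    linarith
  -- the index set A'
  set S : Finset (Fin n) := Finset.univ.filter (fun i : Fin n => (i : ℕ) < m + 1) with hS
  have hmemS : ∀ i : Fin n, i ∈ S ↔ (i : ℕ) < m + 1 := by
    intro i; simp [hS]
  have hScard : S.card = m + 1 := by
    have hle : m + 1 ≤ n := by omega
    have : S = Finset.map ⟨Fin.castLE hle, Fin.castLE_injective hle⟩ Finset.univ := by
      ext x
      rw [Finset.mem_map]
      constructor
      · intro hx
        exact ⟨⟨x, (hmemS x).mp hx⟩, Finset.mem_univ _, rfl⟩
      · rintro ⟨y, -, rfl⟩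
        exact (hmemS _).mpr y.isLt
    rw [this, Finset.card_map, Finset.card_univ, Fintype.card_fin]
  -- good/bad decomposition
  set good : Equiv.Perm (Fin n) → Prop := fun σ => ∀ i : Fin n, (i : ℕ) < m + 1 → m + 1 ≤ (σ i : ℕ)
    with hgood
  have hcompl : permProb p good = 1 - ∑ σ, (if ¬ good σ then p σ else 0) := by
    rw [permProb_eq_sum_ite]
    have : ∑ σ, (if good σ then p σ else 0) + ∑ σ, (if ¬ good σ then p σ else 0) = 1 := by
      rw [← Finset.sum_add_distrib]
      rw [← hsum]
      refine Finset.sum_congr rfl fun σ _ => ?_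
      by_cases h : good σ
      · rw [if_pos h, if_neg (not_not_intro h)]; ring
      · rw [if_neg h, if_pos h]; ring
    rw [eq_sub_iff_add_eq]
    exact this
  -- union bound
  have hunion : ∑ σ, (if ¬ good σ then p σ else 0)
      ≤ ∑ i ∈ S, ∑ j ∈ S, q i j := by
    have step1 : ∑ σ, (if ¬ good σ then p σ else 0)
        ≤ ∑ σ, ∑ i ∈ S, (if ((σ i : ℕ) < m + 1) then p σ else 0) := by
      refine Finset.sum_le_sum fun σ _ => ?_
      by_cases h : good σ
      · rw [if_neg (not_not_intro h)]
        refine Finset.sum_nonneg fun i _ => ?_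
        split <;> [exact hpos σ; exact le_rfl]
      · rw [if_pos h]
        simp only [hgood, not_forall, not_le] at h
        obtain ⟨i, hi1, hi2⟩ := h
        have hiS : i ∈ S := (hmemS i).mpr hi1
        have : (if ((σ i : ℕ) < m + 1) then p σ else 0) = p σ := if_pos (by omega)
        calc p σ = (if ((σ i : ℕ) < m + 1) then p σ else 0) := this.symm
          _ ≤ ∑ i ∈ S, (if ((σ i : ℕ) < m + 1) then p σ else 0) := by
            refine Finset.single_le_sum
              (f := fun i => if ((σ i : ℕ) < m + 1) then p σ else 0) (fun i _ => ?_) hiS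
            split <;> [exact hpos σ; exact le_rfl]
    refine step1.trans (le_of_eq ?_)
    rw [Finset.sum_comm]
    refine Finset.sum_congr rfl fun i hi => ?_
    calc ∑ σ, (if ((σ i : ℕ) < m + 1) then p σ else 0)
        = ∑ σ, ∑ j ∈ S, (if σ i = j then p σ else 0) := by
          refine Finset.sum_congr rfl fun σ _ => ?_
          rw [Finset.sum_ite_eq]
          by_cases h : σ i ∈ S
          · rw [if_pos h, if_pos ((hmemS _).mp h)]
          · rw [if_neg h, if_neg (fun hc => h ((hmemS _).mpr hc))]
      _ = ∑ j ∈ S, q i j := Finset.sum_comm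
  -- evaluate the double sum
  have hdouble : ∑ i ∈ S, ∑ j ∈ S, q i j = (m + 1 : ℝ) * (q0 + m * r) := by
    have hinner : ∀ i ∈ S, ∑ j ∈ S, q i j = q0 + m * r := by
      intro i hi
      rw [← Finset.add_sum_erase _ _ hi]
      congr 1
      · exact hdiag i
      · have : ∀ j ∈ S.erase i, q i j = r := by
          intro j hj
          exact hoff i j (fun h => (Finset.ne_of_mem_erase hj) h.symm)
        rw [Finset.sum_congr rfl this, Finset.sum_const, Finset.card_erase_of_mem hi, hScard]
        simp [nsmul_eq_mul]
    rw [Finset.sum_congr rfl hinner, Finset.sum_const, hScard, nsmul_eq_mul]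
    push_cast
    ring
  -- identify permProb with q0
  have hq0id : permProb p (fun σ => σ ⟨0, by omega⟩ = ⟨0, by omega⟩) = q0 := by
    rw [permProb_eq_sum_ite, hq0, hq]
  -- r in terms of q0
  have hn1pos : (0 : ℝ) < (n : ℝ) - 1 := by
    have : (1 : ℝ) < (n : ℝ) := by exact_mod_cast h1n
    linarith
  have hrval : r = (1 - q0) / ((n : ℝ) - 1) := by
    field_simp
    linarith [hbalance]
  rw [hq0id, hcompl]
  have hfinal : ∑ σ, (if ¬ good σ then p σ else 0) ≤ (m + 1 : ℝ) * (q0 + m * r) := by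
    rw [← hdouble]; exact hunion
  rw [hrval] at hfinal
  have heq : (↑m + 1 : ℝ) * (q0 + ↑m * ((1 - q0) / ((n : ℝ) - 1)))
      = (↑m + 1) * (q0 + ↑m * (1 - q0) / ((n : ℝ) - 1)) := by ring
  rw [heq] at hfinal
  linarith
end
end

section
/- For each n ≥ 1 let p_n be a probability measure on the symmetric group S_n that is invariant under conjugation, and assume p_n({σ : σ(1)=1}) → 0 as n → ∞. Let u_n denote the uniform probability measure on S_n. Then for every finite set A of positive integers, p_n({σ : A ⊆ D(σ)}) − u_n({σ : A ⊆ D(σ)}) → 0 as n → ∞. -/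
noncomputable section

/-!
Let `W` be the set of positions `i - 1`, `i` with `i ∈ A`, so `#W ≤ 2 #A` and the event
`A ⊆ D(σ)` only depends on the restriction of `σ` to `W`. On the event `G` that `σ` sends no point
of `W` into `W`, this restriction is an injection `W → Wᶜ`, and conjugating by permutations fixing
`W` pointwise shows that a conjugation-invariant measure gives all of these fibres the same mass.
Hence `p` and the uniform measure `u` split `G` in the same proportions, and
`|p(E) - u(E)| ≤ 2 (p(Gᶜ) + u(Gᶜ))`. Finally `P(σ x = y) ≤ 1 / (n - 1)` for `x ≠ y`, the values
`y ≠ x` being exchangeable, while `P(σ x = x) = P(σ 1 = 1)`, so `Gᶜ` has probability at most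
`#W ^ 2 (P(σ 1 = 1) + 1 / (n - 1)) → 0`.
-/

open Finset Function

namespace Equiv.Perm

variable {α : Type*} [Fintype α] [DecidableEq α]

section ConjInvariant

variable {M : Type*} [AddCommMonoid M] {r : Perm α → M}

theorem sum_filter_eq_sum_filter_conj (hr : ∀ σ ρ : Perm α, r (ρ⁻¹ * σ * ρ) = r σ)
    (ρ : Perm α) (P : Perm α → Prop) [DecidablePred P] :
    ∑ σ with P σ, r σ = ∑ σ with P (ρ * σ * ρ⁻¹), r σ := by
  simp only [sum_filter]
  refine Fintype.sum_equiv (MulAut.conj ρ⁻¹).toEquiv _ _ fun σ => ?_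
  simp [hr, ← mul_assoc]

theorem sum_filter_restrict_eq_of_injective (hr : ∀ σ ρ : Perm α, r (ρ⁻¹ * σ * ρ) = r σ)
    (W : Finset α) {t t' : W → α} (ht : Injective t) (ht' : Injective t')
    (htW : ∀ x, t x ∉ W) (htW' : ∀ x, t' x ∉ W) :
    ∑ σ with W.restrict (σ : Perm α) = t, r σ = ∑ σ with W.restrict (σ : Perm α) = t', r σ := by
  obtain ⟨ρ, hρ⟩ := exists_extending_pair (Sum.elim Subtype.val t) (Sum.elim Subtype.val t')
    (Subtype.val_injective.sumElim ht fun x y h => htW y (h ▸ x.2))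
    (Subtype.val_injective.sumElim ht' fun x y h => htW' y (h ▸ x.2))
  have hρW (x : W) : ρ⁻¹ x = x := inv_eq_iff_eq.2 (hρ (.inl x)).symm
  symm
  rw [sum_filter_eq_sum_filter_conj hr ρ]
  refine sum_congr (filter_congr fun σ _ => ?_) fun _ _ => rfl
  simp only [funext_iff, restrict, mul_apply, hρW]
  refine forall_congr' fun x => ?_
  rw [← show ρ (t x) = t' x from hρ (.inr x), ρ.injective.eq_iff]

theorem sum_filter_eq_sum_image_restrict (W : Finset α) (Q : Perm α → Prop) [DecidablePred Q]
    (hQ : ∀ σ τ : Perm α, W.restrict σ = W.restrict τ → Q σ → Q τ) :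
    ∑ σ with Q σ, r σ =
      ∑ t ∈ ({σ | Q σ} : Finset (Perm α)).image (fun σ : Perm α => W.restrict σ),
        ∑ σ with W.restrict (σ : Perm α) = t, r σ := by
  rw [← sum_fiberwise_of_maps_to (g := fun σ : Perm α => W.restrict σ)
    fun σ hσ => mem_image_of_mem (fun σ : Perm α => W.restrict σ) hσ]
  refine sum_congr rfl fun t ht => ?_
  obtain ⟨σ₀, hσ₀, rfl⟩ := mem_image.1 ht
  rw [filter_filter]
  refine sum_congr (filter_congr fun σ _ => ?_) fun _ _ => rfl
  exact and_iff_right_of_imp fun h => hQ σ₀ σ h.symm (mem_filter.1 hσ₀).2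

end ConjInvariant

theorem abs_sum_filter_and_le {r : Perm α → ℝ} (hr : ∀ σ ρ : Perm α, r (ρ⁻¹ * σ * ρ) = r σ)
    (W : Finset α) (E : Perm α → Prop) [DecidablePred E]
    (hE : ∀ σ τ : Perm α, W.restrict σ = W.restrict τ → E σ → E τ) :
    |∑ σ with E σ ∧ ∀ x ∈ W, σ x ∉ W, r σ| ≤ |∑ σ with ∀ x ∈ W, σ x ∉ W, r σ| := by
  have hG (σ τ : Perm α) (h : W.restrict σ = W.restrict τ) (hσ : ∀ x ∈ W, σ x ∉ W) :
      ∀ x ∈ W, τ x ∉ W := fun x hx => by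
    simpa [show σ x = τ x from congr_fun h ⟨x, hx⟩] using hσ x hx
  have hgood (σ : Perm α) (hσ : ∀ x ∈ W, σ x ∉ W) :
      Injective (W.restrict σ) ∧ ∀ x, W.restrict σ x ∉ W :=
    ⟨fun x y h => Subtype.ext (σ.injective h), fun x => hσ x x.2⟩
  rw [sum_filter_eq_sum_image_restrict W _ fun σ τ h hσ => ⟨hE σ τ h hσ.1, hG σ τ h hσ.2⟩,
    sum_filter_eq_sum_image_restrict W _ hG]
  set TG := ({σ | ∀ x ∈ W, σ x ∉ W} : Finset (Perm α)).image (fun σ : Perm α => W.restrict σ)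
  have hTE : ({σ | E σ ∧ ∀ x ∈ W, σ x ∉ W} : Finset (Perm α)).image
      (fun σ : Perm α => W.restrict σ) ⊆ TG :=
    image_subset_image <| monotone_filter_right _ fun _ _ h => h.2
  obtain ⟨c, hc⟩ : ∃ c, ∀ t ∈ TG, ∑ σ with W.restrict (σ : Perm α) = t, r σ = c := by
    rcases TG.eq_empty_or_nonempty with hTG | ⟨t₀, ht₀⟩
    · exact ⟨0, by simp [hTG]⟩
    refine ⟨∑ σ with W.restrict (σ : Perm α) = t₀, r σ, fun t ht => ?_⟩
    obtain ⟨σ, hσ, rfl⟩ := mem_image.1 ht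
    obtain ⟨σ₀, hσ₀, rfl⟩ := mem_image.1 ht₀
    obtain ⟨hinj, hout⟩ := hgood σ (mem_filter.1 hσ).2
    obtain ⟨hinj₀, hout₀⟩ := hgood σ₀ (mem_filter.1 hσ₀).2
    exact sum_filter_restrict_eq_of_injective hr W hinj hinj₀ hout hout₀
  rw [sum_eq_card_nsmul hc, sum_eq_card_nsmul fun t ht => hc t (hTE ht)]
  simp only [nsmul_eq_mul, abs_mul, Nat.abs_cast]
  gcongr

theorem abs_sum_filter_sub_sum_filter_le {p q : Perm α → ℝ} (hp0 : ∀ σ, 0 ≤ p σ)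
    (hq0 : ∀ σ, 0 ≤ q σ) (hpq : ∑ σ, p σ = ∑ σ, q σ)
    (hp : ∀ σ ρ : Perm α, p (ρ⁻¹ * σ * ρ) = p σ) (hq : ∀ σ ρ : Perm α, q (ρ⁻¹ * σ * ρ) = q σ)
    (W : Finset α) (E : Perm α → Prop) [DecidablePred E]
    (hE : ∀ σ τ : Perm α, W.restrict σ = W.restrict τ → E σ → E τ) :
    |∑ σ with E σ, p σ - ∑ σ with E σ, q σ| ≤
      2 * (∑ σ with ¬∀ x ∈ W, σ x ∉ W, p σ + ∑ σ with ¬∀ x ∈ W, σ x ∉ W, q σ) := by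
  set G : Perm α → Prop := fun σ => ∀ x ∈ W, σ x ∉ W
  have hsub (S : Finset (Perm α)) : ∑ σ ∈ S, p σ - ∑ σ ∈ S, q σ = ∑ σ ∈ S, (p σ - q σ) :=
    (sum_sub_distrib _ _).symm
  have habs (S : Finset (Perm α)) : |∑ σ ∈ S, (p σ - q σ)| ≤ ∑ σ ∈ S, p σ + ∑ σ ∈ S, q σ := by
    have hpS : 0 ≤ ∑ σ ∈ S, p σ := sum_nonneg fun σ _ => hp0 σ
    have hqS : 0 ≤ ∑ σ ∈ S, q σ := sum_nonneg fun σ _ => hq0 σ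
    rw [← hsub, abs_le]
    constructor <;> linarith
  have hmono (r : Perm α → ℝ) (hr : ∀ σ, 0 ≤ r σ) :
      ∑ σ with E σ ∧ ¬G σ, r σ ≤ ∑ σ with ¬G σ, r σ :=
    sum_le_sum_of_subset_of_nonneg (monotone_filter_right _ fun _ _ h => h.2)
      fun σ _ _ => hr σ
  have hG_compl : ∑ σ with G σ, (p σ - q σ) = -∑ σ with ¬G σ, (p σ - q σ) := by
    have htotal : ∑ σ, (p σ - q σ) = 0 := by rw [sum_sub_distrib, hpq, sub_self]
    linarith [sum_filter_add_sum_filter_not univ G fun σ => p σ - q σ]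
  have hsplit := sum_filter_add_sum_filter_not {σ | E σ} G fun σ => p σ - q σ
  simp only [filter_filter] at hsplit
  have hEG := abs_sum_filter_and_le (r := fun σ => p σ - q σ) (fun σ ρ => by simp only [hp, hq])
    W E hE
  rw [hG_compl, abs_neg] at hEG
  calc |∑ σ with E σ, p σ - ∑ σ with E σ, q σ|
      = |∑ σ with E σ ∧ G σ, (p σ - q σ) + ∑ σ with E σ ∧ ¬G σ, (p σ - q σ)| := by
        rw [hsub, hsplit]
    _ ≤ |∑ σ with ¬G σ, (p σ - q σ)| + |∑ σ with E σ ∧ ¬G σ, (p σ - q σ)| :=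
        (abs_add_le _ _).trans (add_le_add hEG le_rfl)
    _ ≤ 2 * (∑ σ with ¬G σ, p σ + ∑ σ with ¬G σ, q σ) := by
        linarith [habs {σ | ¬G σ}, habs {σ | E σ ∧ ¬G σ}, hmono p hp0, hmono q hq0]

theorem sum_filter_apply_self_eq {p : Perm α → ℝ} (hp : ∀ σ ρ : Perm α, p (ρ⁻¹ * σ * ρ) = p σ)
    (x y : α) : ∑ σ with σ x = x, p σ = ∑ σ with σ y = y, p σ := by
  rw [sum_filter_eq_sum_filter_conj hp (swap x y)]
  refine sum_congr (filter_congr fun σ _ => ?_) fun _ _ => rfl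
  simp [swap_apply_eq_iff]

theorem sum_filter_apply_eq_le_of_ne {p : Perm α → ℝ} (hp0 : ∀ σ, 0 ≤ p σ)
    (hp1 : ∑ σ, p σ = 1) (hp : ∀ σ ρ : Perm α, p (ρ⁻¹ * σ * ρ) = p σ) {x y : α} (hxy : x ≠ y) :
    ∑ σ with σ x = y, p σ ≤ ((Fintype.card α : ℝ) - 1)⁻¹ := by
  have heq (z : α) (hz : z ≠ x) : ∑ σ with σ x = z, p σ = ∑ σ with σ x = y, p σ := by
    rw [sum_filter_eq_sum_filter_conj hp (swap y z)]
    refine sum_congr (filter_congr fun σ _ => ?_) fun _ _ => rfl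
    simp [swap_apply_of_ne_of_ne hxy hz.symm, swap_apply_eq_iff]
  have hle : ∑ z ∈ univ.erase x, ∑ σ with σ x = z, p σ ≤ 1 := by
    rw [← hp1, ← sum_fiberwise univ (fun σ : Perm α => σ x)]
    exact sum_le_sum_of_subset_of_nonneg (erase_subset _ _)
      fun _ _ _ => sum_nonneg fun σ _ => hp0 σ
  have hcard : (1 : ℝ) < Fintype.card α := by
    exact_mod_cast Fintype.one_lt_card_iff.2 ⟨x, y, hxy⟩
  rw [sum_congr rfl fun z hz => heq z (ne_of_mem_erase hz), sum_const,
    card_erase_of_mem (mem_univ x), card_univ, nsmul_eq_mul,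
    Nat.cast_sub (Fintype.card_pos_iff.2 ⟨x⟩), Nat.cast_one] at hle
  rwa [← one_div, le_div_iff₀' (sub_pos.2 hcard)]

theorem sum_filter_apply_eq_le {p : Perm α → ℝ} (hp0 : ∀ σ, 0 ≤ p σ)
    (hp1 : ∑ σ, p σ = 1) (hp : ∀ σ ρ : Perm α, p (ρ⁻¹ * σ * ρ) = p σ) (x y x₀ : α) :
    ∑ σ with σ x = y, p σ ≤ ∑ σ with σ x₀ = x₀, p σ + ((Fintype.card α : ℝ) - 1)⁻¹ := by
  rcases eq_or_ne x y with rfl | hxy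
  · have : (1 : ℝ) ≤ Fintype.card α := by exact_mod_cast Fintype.card_pos_iff.2 ⟨x⟩
    rw [sum_filter_apply_self_eq hp x x₀]
    exact le_add_of_nonneg_right (inv_nonneg.2 (sub_nonneg.2 this))
  · exact (sum_filter_apply_eq_le_of_ne hp0 hp1 hp hxy).trans
      (le_add_of_nonneg_left (sum_nonneg fun σ _ => hp0 σ))

theorem sum_filter_not_forall_le {p : Perm α → ℝ} (hp0 : ∀ σ, 0 ≤ p σ) (W : Finset α) :
    ∑ σ with ¬∀ x ∈ W, σ x ∉ W, p σ ≤ ∑ x ∈ W, ∑ y ∈ W, ∑ σ with σ x = y, p σ := by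
  rw [sum_filter]
  calc _ ≤ ∑ σ, ∑ x ∈ W, ∑ y ∈ W, if σ x = y then p σ else 0 := sum_le_sum fun σ _ => ?_
    _ = _ := by
      simp only [sum_filter]
      rw [sum_comm]
      exact sum_congr rfl fun x _ => sum_comm
  simp only [sum_ite_eq]
  by_cases hσ : ∀ x ∈ W, σ x ∉ W
  · rw [if_neg (not_not_intro hσ)]
    exact sum_nonneg fun _ _ => ite_nonneg (hp0 σ) le_rfl
  · rw [if_pos hσ]
    simp only [not_forall, not_not] at hσ
    obtain ⟨x, hx, hσx⟩ := hσ
    exact le_of_eq_of_le (if_pos hσx).symm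
      (single_le_sum (f := fun x => if σ x ∈ W then p σ else 0)
        (fun _ _ => ite_nonneg (hp0 σ) le_rfl) hx)

theorem sum_filter_not_forall_le_card_sq {p : Perm α → ℝ} (hp0 : ∀ σ, 0 ≤ p σ)
    (hp1 : ∑ σ, p σ = 1) (hp : ∀ σ ρ : Perm α, p (ρ⁻¹ * σ * ρ) = p σ) (W : Finset α) (x₀ : α) :
    ∑ σ with ¬∀ x ∈ W, σ x ∉ W, p σ ≤
      #W ^ 2 * (∑ σ with σ x₀ = x₀, p σ + ((Fintype.card α : ℝ) - 1)⁻¹) := by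
  calc ∑ σ with ¬∀ x ∈ W, σ x ∉ W, p σ
      ≤ ∑ x ∈ W, ∑ y ∈ W, ∑ σ with σ x = y, p σ := sum_filter_not_forall_le hp0 W
    _ ≤ ∑ x ∈ W, ∑ y ∈ W, (∑ σ with σ x₀ = x₀, p σ + ((Fintype.card α : ℝ) - 1)⁻¹) := by
        gcongr with x _ y _
        exact sum_filter_apply_eq_le hp0 hp1 hp x y x₀
    _ = _ := by simp only [sum_const, nsmul_eq_mul]; ring

theorem card_filter_apply_self_mul_card (x : α) :
    #{σ : Perm α | σ x = x} * Fintype.card α = (Fintype.card α).factorial := by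
  have hfibre (y : α) : #{σ : Perm α | σ x = y} = #{σ : Perm α | σ x = x} :=
    card_nbij' (swap x y * ·) (swap x y * ·) (fun σ => by simp_all) (fun σ => by simp_all)
      (fun σ _ => by simp) (fun σ _ => by simp)
  have hsum : #(univ : Finset (Perm α)) = ∑ y, #{σ : Perm α | σ x = y} :=
    card_eq_sum_card_fiberwise fun _ _ => mem_univ _
  rw [card_univ, Fintype.card_perm] at hsum
  simp [hsum, hfibre, mul_comm]

theorem sum_filter_apply_self_inv_factorial (x : α) :
    ∑ σ with (σ : Perm α) x = x, ((Fintype.card α).factorial : ℝ)⁻¹ = (Fintype.card α : ℝ)⁻¹ := by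
  have hfix : 0 < #{σ : Perm α | σ x = x} := card_pos.2 ⟨1, by simp⟩
  have hcard : 0 < Fintype.card α := Fintype.card_pos_iff.2 ⟨x⟩
  rw [sum_const, nsmul_eq_mul, ← card_filter_apply_self_mul_card x]
  rw [Nat.cast_mul]
  field_simp

theorem abs_sum_filter_sub_uniform_le {p : Perm α → ℝ} (hp0 : ∀ σ, 0 ≤ p σ)
    (hp1 : ∑ σ, p σ = 1) (hp : ∀ σ ρ : Perm α, p (ρ⁻¹ * σ * ρ) = p σ)
    (W : Finset α) (E : Perm α → Prop) [DecidablePred E]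
    (hE : ∀ σ τ : Perm α, W.restrict σ = W.restrict τ → E σ → E τ) (x₀ : α) :
    |∑ σ with E σ, p σ - ∑ σ with E σ, ((Fintype.card α).factorial : ℝ)⁻¹| ≤
      2 * #W ^ 2 * (∑ σ with σ x₀ = x₀, p σ + (Fintype.card α : ℝ)⁻¹ +
        2 * ((Fintype.card α : ℝ) - 1)⁻¹) := by
  set u : Perm α → ℝ := fun _ => ((Fintype.card α).factorial : ℝ)⁻¹
  have hu0 (σ : Perm α) : 0 ≤ u σ := by positivity
  have hu1 : ∑ σ, u σ = 1 := by
    simp [u, Fintype.card_perm, (Nat.factorial_pos _).ne']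
  have htail_u := sum_filter_not_forall_le_card_sq hu0 hu1 (fun _ _ => rfl) W x₀
  rw [sum_filter_apply_self_inv_factorial] at htail_u
  calc _ ≤ 2 * (∑ σ with ¬∀ x ∈ W, σ x ∉ W, p σ + ∑ σ with ¬∀ x ∈ W, σ x ∉ W, u σ) :=
        abs_sum_filter_sub_sum_filter_le hp0 hu0 (hp1.trans hu1.symm) hp (fun _ _ => rfl) W E hE
    _ ≤ 2 * (#W ^ 2 * (∑ σ with σ x₀ = x₀, p σ + ((Fintype.card α : ℝ) - 1)⁻¹) +
          #W ^ 2 * ((Fintype.card α : ℝ)⁻¹ + ((Fintype.card α : ℝ) - 1)⁻¹)) := by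
        gcongr
        · exact sum_filter_not_forall_le_card_sq hp0 hp1 hp W x₀
    _ = _ := by ring

end Equiv.Perm

open Equiv

theorem permProb_eq_sum_filter {n : ℕ} (p : Perm (Fin n) → ℝ) (P : Perm (Fin n) → Prop)
    [DecidablePred P] : permProb p P = ∑ σ with P σ, p σ := by
  rw [permProb, sum_filter]
  simp [Set.indicator_apply]

/-- The positions `i - 1` and `i` (0-based) compared by the descents `i ∈ A`. -/
def descentPositions (n : ℕ) (A : Finset ℕ) : Finset (Fin n) :=
  {x | (x : ℕ) ∈ A ∨ (x : ℕ) + 1 ∈ A}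

theorem card_descentPositions_le (n : ℕ) (A : Finset ℕ) : #(descentPositions n A) ≤ 2 * #A := by
  rw [descentPositions, filter_or, two_mul]
  refine (card_union_le _ _).trans (add_le_add ?_ ?_)
  · exact card_le_card_of_injOn (fun x : Fin n => (x : ℕ)) (fun x hx => (mem_filter.1 hx).2)
      fun x _ y _ h => Fin.ext h
  · exact card_le_card_of_injOn (fun x : Fin n => (x : ℕ) + 1) (fun x hx => (mem_filter.1 hx).2)
      fun x _ y _ h => Fin.ext (Nat.succ_injective h)

theorem descentAt_of_restrict_eq {n a : ℕ} {A : Finset ℕ} {σ τ : Perm (Fin n)}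
    (h : (descentPositions n A).restrict σ = (descentPositions n A).restrict τ)
    (ha : 1 ≤ a) (haA : a ∈ A) (hσ : descentAt σ a) : descentAt τ a := by
  obtain ⟨h₁, h₂, hlt⟩ := hσ
  have hmem : ∀ i (hi : i < n), i = a ∨ i + 1 = a → σ ⟨i, hi⟩ = τ ⟨i, hi⟩ := by
    rintro i hi hia
    refine congr_fun h ⟨⟨i, hi⟩, mem_filter.2 ⟨mem_univ _, ?_⟩⟩
    rcases hia with rfl | rfl <;> simp [haA]
  refine ⟨h₁, h₂, ?_⟩
  rwa [← hmem a h₂ (.inl rfl), ← hmem (a - 1) h₁ (.inr (Nat.sub_add_cancel ha))]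

theorem abs_permProb_sub_uniform_le {n : ℕ} (hn : 0 < n) {p : Perm (Fin n) → ℝ}
    (hp0 : ∀ σ, 0 ≤ p σ) (hp1 : ∑ σ, p σ = 1) (hp : ∀ σ ρ : Perm (Fin n), p (ρ⁻¹ * σ * ρ) = p σ)
    {A : Finset ℕ} (hA : ∀ a ∈ A, 1 ≤ a) :
    |permProb p (fun σ => ∀ a ∈ A, descentAt σ a) -
        permProb (fun _ : Perm (Fin n) => (n.factorial : ℝ)⁻¹) (fun σ => ∀ a ∈ A, descentAt σ a)| ≤
      2 * (2 * #A) ^ 2 * (permProb p (fun σ => ∀ h : 0 < n, σ ⟨0, h⟩ = ⟨0, h⟩) +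
        (n : ℝ)⁻¹ + 2 * ((n : ℝ) - 1)⁻¹) := by
  classical
  have hfix : permProb p (fun σ => ∀ h : 0 < n, σ ⟨0, h⟩ = ⟨0, h⟩) =
      ∑ σ with σ ⟨0, hn⟩ = ⟨0, hn⟩, p σ := by
    rw [permProb_eq_sum_filter]
    simp only [forall_prop_of_true hn]
  have hW : (#(descentPositions n A) : ℝ) ≤ 2 * #A := by
    exact_mod_cast card_descentPositions_le n A
  have hbound := Perm.abs_sum_filter_sub_uniform_le hp0 hp1 hp (descentPositions n A)
    (fun σ => ∀ a ∈ A, descentAt σ a)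
    (fun σ τ h hσ a haA => descentAt_of_restrict_eq h (hA a haA) haA (hσ a haA)) ⟨0, hn⟩
  simp only [Fintype.card_fin] at hbound
  rw [permProb_eq_sum_filter, permProb_eq_sum_filter, hfix]
  refine hbound.trans (mul_le_mul_of_nonneg_right (by gcongr) ?_)
  have hn1 : (0 : ℝ) ≤ n - 1 := sub_nonneg.2 (by exact_mod_cast hn)
  have hfix0 : 0 ≤ ∑ σ with σ ⟨0, hn⟩ = ⟨0, hn⟩, p σ := sum_nonneg fun σ _ => hp0 σ
  positivity

theorem stmt_14 (p : (n : ℕ) → Equiv.Perm (Fin n) → ℝ)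
    (hpos : ∀ n, 1 ≤ n → ∀ σ, 0 ≤ p n σ)
    (hsum : ∀ n, 1 ≤ n → ∑ σ, p n σ = 1)
    (hinv : ∀ n, 1 ≤ n → ∀ σ ρ : Equiv.Perm (Fin n), p n (ρ⁻¹ * σ * ρ) = p n σ)
    (hfix : Filter.Tendsto
      (fun n => permProb (p n) (fun σ => ∀ h : 0 < n, σ ⟨0, h⟩ = ⟨0, h⟩))
      Filter.atTop (nhds 0)) :
    ∀ A : Finset ℕ, (∀ a ∈ A, 1 ≤ a) →
      Filter.Tendsto (fun n =>
          permProb (p n) (fun σ => ∀ a ∈ A, descentAt σ a)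
          - permProb (fun _ : Equiv.Perm (Fin n) => ((n.factorial : ℝ))⁻¹)
              (fun σ => ∀ a ∈ A, descentAt σ a))
        Filter.atTop (nhds 0) := by
  intro A hA
  have hn_inv : Filter.Tendsto (fun n : ℕ => (n : ℝ)⁻¹) Filter.atTop (nhds 0) :=
    tendsto_inv_atTop_zero.comp tendsto_natCast_atTop_atTop
  have hn_pred_inv : Filter.Tendsto (fun n : ℕ => ((n : ℝ) - 1)⁻¹) Filter.atTop (nhds 0) :=
    tendsto_inv_atTop_zero.comp
      (Filter.tendsto_atTop_add_const_right _ (-1) tendsto_natCast_atTop_atTop)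
  refine squeeze_zero_norm' ?_ <| by
    simpa using ((hfix.add hn_inv).add (hn_pred_inv.const_mul 2)).const_mul
      (2 * (2 * #A : ℝ) ^ 2)
  filter_upwards [Filter.eventually_ge_atTop 1] with n hn
  rw [Real.norm_eq_abs]
  exact abs_permProb_sub_uniform_le hn (hpos n hn) (hsum n hn) (hinv n hn) hA
end
end
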